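/- Let C ∈ {B,W}, let v̂, û be grey nodes of Ĥ_{C,d} (i.e., f_C(v̂) = f_C(û) = G), and let t ∈ ℕ be such that the corresponding nodes v and u of H_{C,d} are t-SV-bisimilar. If w ∈ dom(f_{v,u}), dist(w, v_C) < 2d − t and dist(f_{v,u}(w), v_C) < 2d − t (where dist is graph distance in H_{C,d} and v_C = ∅ is the root), then w and f_{v,u}(w) are t-SV-bisimilar in (H_{C,d}, f_C, p_C). -/

import Mathlib

namespace Paper

/-- The degree of a vertex: the number of its neighbours. -/
noncomputable def deg {V : Type} (G : SimpleGraph V) (v : V) : ℕ :=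
  {u | G.Adj v u}.ncard

/-- A port numbering of a graph, modelled as a partial map sending each
output port `(v, i)` with `1 ≤ i ≤ deg v` to an input port `(u, j)` of an
adjacent node `u`, bijectively, such that there is a port between `v` and `u`
if and only if they are adjacent. -/
structure IsPortNumbering {V : Type} (G : SimpleGraph V)
    (pn : V → ℕ → Option (V × ℕ)) : Prop where
  dom : ∀ v i, (pn v i).isSome ↔ 1 ≤ i ∧ i ≤ deg G v
  adj : ∀ v i u j, pn v i = some (u, j) → G.Adj v u ∧ 1 ≤ j ∧ j ≤ deg G u
  bij : ∀ u j, 1 ≤ j → j ≤ deg G u → ∃! vi : V × ℕ, pn vi.1 vi.2 = some (u, j)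
  edge : ∀ v u, G.Adj v u ↔ ∃ i j, pn v i = some (u, j)

/-- A generalised port numbering with port numbers from an arbitrary set `N`:
each node `v` has a set of `deg v` output port numbers (those `o` with
`pn v o ≠ none`) and a set of `deg v` input port numbers (those `i` received
from some output port), and `pn` is a bijection from output ports to input
ports of adjacent nodes. -/
structure IsGenPortNumbering {V N : Type} (G : SimpleGraph V)
    (pn : V → N → Option (V × N)) : Prop where
  adj : ∀ v o u i, pn v o = some (u, i) → G.Adj v u
  edge : ∀ v u, G.Adj v u → ∃ o i, pn v o = some (u, i)
  inj : ∀ v o v' o' u i, pn v o = some (u, i) → pn v' o' = some (u, i) →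
    v = v' ∧ o = o'
  out_card : ∀ v, {o | (pn v o).isSome}.ncard = deg G v
  in_card : ∀ u, {i | ∃ v o, pn v o = some (u, i)}.ncard = deg G u

/-- `r`-SV-bisimilarity of `(G, f, v, p)` and `(G', f', v', p')`. -/
def SVBisim {V V' X N : Type} (G : SimpleGraph V) (G' : SimpleGraph V')
    (f : V → X) (f' : V' → X)
    (p : V → N → Option (V × N)) (p' : V' → N → Option (V' × N)) :
    ℕ → V → V' → Prop
  | 0, v, v' => deg G v = deg G' v' ∧ f v = f' v'
  | r + 1, v, v' =>
      (deg G v = deg G' v' ∧ f v = f' v') ∧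
      (∀ w, G.Adj v w → ∃ w', G'.Adj v' w' ∧
        SVBisim G G' f f' p p' r w w' ∧
        ∃ a b c, p w a = some (v, b) ∧ p' w' a = some (v', c)) ∧
      (∀ w', G'.Adj v' w' → ∃ w, G.Adj v w ∧
        SVBisim G G' f f' p p' r w w' ∧
        ∃ a b c, p w a = some (v, b) ∧ p' w' a = some (v', c))

/-- Nodes of the tree `G_d` are finite sequences of pairs of numbers.
We represent a sequence `(a₁, …, a_i)` as the list `[a_i, …, a₁]`, i.e. in
reverse order, so that consing corresponds to appending a pair at the end. -/
abbrev Nd : Type := ℕ × ℕ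

/-- `b₂⁺`: `1` if `b₂ = 0`, and `b₂` otherwise. -/
def bplus (b : ℕ) : ℕ := if b = 0 then 1 else b

/-- For `j ≥ 1`, the `j`-th smallest element of `{lo, lo+1, lo+2, …} \ {f}`.
This realises the greedy choices `c^j = min({lo,…} \ {f, c¹, …, c^{j-1}})`. -/
def nthAvoid (lo f j : ℕ) : ℕ :=
  if lo + j - 1 < f ∨ f < lo then lo + j - 1 else lo + j

/-- The node set `V_d` of the graph `G_d`, given by the rules (G1)–(G4).
(Sequences are represented as reversed lists, the head being the last pair
`a_i` of the sequence.) -/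
inductive Vd (d : ℕ) : List Nd → Prop
  /-- (G1): the empty sequence is a node. -/
  | nil : Vd d []
  /-- (G2): the sequences `((1,0)), ((2,1)), …, ((d,d−1))` are nodes. -/
  | base (k : ℕ) (h1 : 1 ≤ k) (h2 : k ≤ d) : Vd d [(k, k - 1)]
  /-- (G3): children of a node of odd length `< 2d` with last pair `(b₁, b₂)`:
  for `j = 1, …, d−1` append `(c₁ʲ, c₂ʲ)` where `c₁ʲ` is the `j`-th smallest
  element of `{1,…,d} \ {b₂⁺}` and `c₂ʲ` the `j`-th smallest of `{1,…,d} \ {b₁}`. -/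
  | odd (b₁ b₂ : ℕ) (rest : List Nd)
      (hv : Vd d ((b₁, b₂) :: rest))
      (hodd : Odd ((b₁, b₂) :: rest).length)
      (hlt : ((b₁, b₂) :: rest).length < 2 * d)
      (j : ℕ) (hj1 : 1 ≤ j) (hj2 : j ≤ d - 1) :
      Vd d ((nthAvoid 1 (bplus b₂) j, nthAvoid 1 b₁ j) :: (b₁, b₂) :: rest)
  /-- (G4): children of a node of even positive length `< 2d` with last pair
  `(b₁, b₂)`: for `j = 1, …, d−1` append `(c₁ʲ, c₂ʲ)` where `c₁ʲ` is the `j`-th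
  smallest element of `{1,…,d} \ {b₂}` and `c₂ʲ` the `j`-th smallest of
  `{0,…,d−1} \ {b₁}`. -/
  | even (b₁ b₂ : ℕ) (rest : List Nd)
      (hv : Vd d ((b₁, b₂) :: rest))
      (heven : Even ((b₁, b₂) :: rest).length)
      (hlt : ((b₁, b₂) :: rest).length < 2 * d)
      (j : ℕ) (hj1 : 1 ≤ j) (hj2 : j ≤ d - 1) :
      Vd d ((nthAvoid 1 b₂ j, nthAvoid 0 b₁ j) :: (b₁, b₂) :: rest)

/-- The edge relation of `G_d`: `u` is a child of `v` or vice versa. -/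
def Ed (d : ℕ) (v u : List Nd) : Prop :=
  Vd d v ∧ Vd d u ∧ ∃ a : Nd, u = a :: v ∨ v = a :: u

/-- The outgoing port number `π_d(v, u)` from `v` towards an adjacent node `u`:
if `u = (b₁, b₂) :: v` is a child of `v` then `b₁`, and if `v = (b₁, b₂) :: u`
is a child of `u` then `b₂`. -/
def outPort (v u : List Nd) : ℕ :=
  if u.length = v.length + 1 then u.headI.1 else v.headI.2

/-- A pair of compatible walks (PCW) of length `k` in `G_d`:
two walks starting at `((1,0))` and `((2,1))` such that the outgoing port
numbers backwards along the walks coincide. -/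
structure IsPCW (d k : ℕ) (w₁ w₂ : ℕ → List Nd) : Prop where
  klen : k ≤ 2 * d - 3
  walk₁ : ∀ j < k, Ed d (w₁ j) (w₁ (j + 1))
  walk₂ : ∀ j < k, Ed d (w₂ j) (w₂ (j + 1))
  start₁ : w₁ 0 = [(1, 0)]
  start₂ : w₂ 0 = [(2, 1)]
  compat : ∀ j, 1 ≤ j → j ≤ k →
    outPort (w₁ j) (w₁ (j - 1)) = outPort (w₂ j) (w₂ (j - 1))

/-- A pair of separating walks (PSW): a PCW such that the last node of the
first walk has a neighbour whose outgoing port number towards it is matched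
by no neighbour of the last node of the second walk. -/
structure IsPSW (d k : ℕ) (w₁ w₂ : ℕ → List Nd)
    extends IsPCW d k w₁ w₂ : Prop where
  sep : ∃ x, Ed d (w₁ k) x ∧
    ∀ y, Ed d (w₂ k) y → outPort x (w₁ k) ≠ outPort y (w₂ k)

/-- A PSW of length `k` in `G_d` is critical if there is no strictly shorter
PSW in `G_d`. -/
def IsCriticalPSW (d k : ℕ) (w₁ w₂ : ℕ → List Nd) : Prop :=
  IsPSW d k w₁ w₂ ∧ ∀ k' w₁' w₂', IsPSW d k' w₁' w₂' → k ≤ k'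

/-- The three colours: black, white, grey. -/
inductive Col : Type
  | B | W | G
deriving DecidableEq

/-- The complementary colour: `B̄ = W`, `W̄ = B` (grey is left untouched). -/
def Col.flip : Col → Col
  | Col.B => Col.W
  | Col.W => Col.B
  | Col.G => Col.G


/-- Nodes of the trees `H_{C,d}` are finite sequences of triples
(number, number, colour), represented as reversed lists. -/
abbrev Nd3 : Type := ℕ × ℕ × Col

/-- The colouring `f_C`: the root gets grey, any other node the colour
component of its last triple. -/
def fH : List Nd3 → Col
  | [] => Col.G
  | (_, _, c) :: _ => c

/-- The node set `V_{C,d}` of the graph `H_{C,d}`, given by rules (H1)–(H6). -/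
inductive VH (C : Col) (d : ℕ) : List Nd3 → Prop
  /-- (H1): the empty sequence is a node. -/
  | nil : VH C d []
  /-- (H2): the sequences `((1,0,C)), ((2,1,C)), …, ((d,d−1,C))`. -/
  | base (k : ℕ) (h1 : 1 ≤ k) (h2 : k ≤ d) : VH C d [(k, k - 1, C)]
  /-- (H3): the sequences `((2,1,C̄)), …, ((d,d−1,C̄))`. -/
  | base' (k : ℕ) (h1 : 2 ≤ k) (h2 : k ≤ d) : VH C d [(k, k - 1, Col.flip C)]
  /-- (H4): grey children of a node of odd length `< 2d` with last triple
  `(b₁, b₂, c)`, `c ∈ {B, W}`. -/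
  | odd (b₁ b₂ : ℕ) (c : Col) (rest : List Nd3)
      (hc : c ≠ Col.G)
      (hv : VH C d ((b₁, b₂, c) :: rest))
      (hodd : Odd ((b₁, b₂, c) :: rest).length)
      (hlt : ((b₁, b₂, c) :: rest).length < 2 * d)
      (j : ℕ) (hj1 : 1 ≤ j) (hj2 : j ≤ d - 1) :
      VH C d ((nthAvoid 1 (bplus b₂) j, nthAvoid 1 b₁ j, Col.G) ::
        (b₁, b₂, c) :: rest)
  /-- (H5): children of colour `c` of a grey node of even positive length
  `< 2d` with last triple `(b₁, b₂, G)` and previous triple `(d₁, d₂, c)`,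
  `c ∈ {B, W}`. -/
  | evenSame (b₁ b₂ d₁ d₂ : ℕ) (c : Col) (rest : List Nd3)
      (hc : c ≠ Col.G)
      (hv : VH C d ((b₁, b₂, Col.G) :: (d₁, d₂, c) :: rest))
      (heven : Even ((b₁, b₂, Col.G) :: (d₁, d₂, c) :: rest).length)
      (hlt : ((b₁, b₂, Col.G) :: (d₁, d₂, c) :: rest).length < 2 * d)
      (j : ℕ) (hj1 : 1 ≤ j) (hj2 : j ≤ d - 1) :
      VH C d ((nthAvoid 1 b₂ j, nthAvoid 0 b₁ j, c) ::
        (b₁, b₂, Col.G) :: (d₁, d₂, c) :: rest)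
  /-- (H6): children of colour `c̄` of a grey node of even positive length
  `< 2d` with previous triple `(d₁, d₂, c)`, `c ∈ {B, W}`; here
  `c₁ʲ = min({2,…,d} \ {c₁¹,…}) = j + 1` and `c₂ʲ = min({1,…,d−1} \ {c₂¹,…}) = j`. -/
  | evenFlip (b₁ b₂ d₁ d₂ : ℕ) (c : Col) (rest : List Nd3)
      (hc : c ≠ Col.G)
      (hv : VH C d ((b₁, b₂, Col.G) :: (d₁, d₂, c) :: rest))
      (heven : Even ((b₁, b₂, Col.G) :: (d₁, d₂, c) :: rest).length)
      (hlt : ((b₁, b₂, Col.G) :: (d₁, d₂, c) :: rest).length < 2 * d)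
      (j : ℕ) (hj1 : 1 ≤ j) (hj2 : j ≤ d - 1) :
      VH C d ((j + 1, j, Col.flip c) ::
        (b₁, b₂, Col.G) :: (d₁, d₂, c) :: rest)

/-- The edge relation of `H_{C,d}`. -/
def EH (C : Col) (d : ℕ) (v u : List Nd3) : Prop :=
  VH C d v ∧ VH C d u ∧ ∃ a : Nd3, u = a :: v ∨ v = a :: u

/-- The graph `H_{C,d}` as a simple graph on all lists of triples. -/
def HGraph (C : Col) (d : ℕ) : SimpleGraph (List Nd3) where
  Adj v u := EH C d v u
  symm := by
    constructor
    rintro v u ⟨hv, hu, a, h⟩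
    exact ⟨hu, hv, a, h.symm⟩
  loopless := by
    constructor
    rintro v ⟨-, -, a, h | h⟩ <;>
      exact absurd (congrArg List.length h) (by simp)

/-- Membership in the induced subgraph `Ĥ_{C,d}`: every prefix of the
sequence (i.e. every suffix of the reversed list) is grey or of colour `C`. -/
def inHat (C : Col) (v : List Nd3) : Prop :=
  ∀ s : List Nd3, s <:+ v → (fH s = C ∨ fH s = Col.G)

/-- The induced subgraph `Ĥ_{C,d}` of `H_{C,d}`. -/
def HhatGraph (C : Col) (d : ℕ) : SimpleGraph (List Nd3) where
  Adj v u := EH C d v u ∧ inHat C v ∧ inHat C u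
  symm := by
    constructor
    rintro v u ⟨⟨hv, hu, a, h⟩, h1, h2⟩
    exact ⟨⟨hu, hv, a, h.symm⟩, h2, h1⟩
  loopless := by
    constructor
    rintro v ⟨⟨-, -, a, h | h⟩, -, -⟩ <;>
      exact absurd (congrArg List.length h) (by simp)

open Classical in
/-- The generalised port numbering `p_C` of `H_{C,d}`, with port numbers that
are pairs (number, colour): along the edge between a node and its child, each
of the two outgoing port labels consists of the corresponding number of the
child's last triple together with the colour of the node at the other end. -/
noncomputable def pH (C : Col) (d : ℕ) (v : List Nd3) (q : ℕ × Col) :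
    Option (List Nd3 × (ℕ × Col)) :=
  if h : ∃ c₂ : ℕ, VH C d ((q.1, c₂, q.2) :: v) then
    some ((q.1, h.choose, q.2) :: v, (h.choose, fH v))
  else
    match v with
    | (b₁, b₂, cv) :: w =>
        if q = (b₂, fH w) ∧ VH C d ((b₁, b₂, cv) :: w) then
          some (w, (b₁, cv))
        else none
    | [] => none

open Classical in
/-- The restriction of the generalised port numbering `p_C` to the induced
subgraph `Ĥ_{C,d}`. -/
noncomputable def pHhat (C : Col) (d : ℕ) (v : List Nd3) (q : ℕ × Col) :
    Option (List Nd3 × (ℕ × Col)) :=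
  match pH C d v q with
  | some (u, a) => if inHat C v ∧ inHat C u then some (u, a) else none
  | none => none

/-- The isomorphism `g_C` from `Ĥ_{C,d}` to `G_d`: forget the colours. -/
def gC (v : List Nd3) : List Nd := v.map (fun t => (t.1, t.2.1))

/-!
Since `v` and `u` are grey, their lengths are even. For `ext ≠ []` the rules (H4)–(H6) then
allow the same triples to be appended to `ext ++ v` and to `ext ++ u`, because they only look at
the last two triples and at the parity of the length (and at the bound `2d`, which the distance
hypothesis guarantees). So `ext ++ v ↦ ext ++ u` matches the neighbours of corresponding nodes,
with the same colours, degrees and port labels. A bisimulation game started at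
`(ext ++ v, ext ++ u)` is copied move by move until it reaches `(v, u)`, where the hypothesis
takes over.
-/

lemma Col.flip_ne_self {c : Col} (hc : c ≠ Col.G) : c.flip ≠ c := by
  cases c <;> simp_all [Col.flip]

lemma Col.flip_ne_G {c : Col} (hc : c ≠ Col.G) : c.flip ≠ Col.G := by
  cases c <;> simp_all [Col.flip]

lemma nthAvoid_injective {lo f j j' : ℕ} (hj : 1 ≤ j) (hj' : 1 ≤ j')
    (h : nthAvoid lo f j = nthAvoid lo f j') : j = j' := by
  unfold nthAvoid at h; split_ifs at h <;> omega

lemma nthAvoid_ne {lo f j : ℕ} (hj : 1 ≤ j) : nthAvoid lo f j ≠ f := by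
  unfold nthAvoid; split_ifs <;> omega

lemma nthAvoid_bplus_ne {b j : ℕ} (hj : 1 ≤ j) : nthAvoid 1 (bplus b) j ≠ b := by
  unfold nthAvoid bplus; split_ifs <;> omega

lemma SVBisim.of_succ {V V' X N : Type} {G : SimpleGraph V} {G' : SimpleGraph V'}
    {f : V → X} {f' : V' → X} {p : V → N → Option (V × N)} {p' : V' → N → Option (V' × N)} :
    ∀ {r : ℕ} {v : V} {v' : V'}, SVBisim G G' f f' p p' (r + 1) v v' →
      SVBisim G G' f f' p p' r v v'
  | 0, _, _, h => h.1
  | _ + 1, _, _, ⟨h₀, hforth, hback⟩ =>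
    ⟨h₀,
      fun w hw => (hforth w hw).imp fun _ ⟨hadj, hb, hp⟩ => ⟨hadj, hb.of_succ, hp⟩,
      fun w' hw' => (hback w' hw').imp fun _ ⟨hadj, hb, hp⟩ => ⟨hadj, hb.of_succ, hp⟩⟩

lemma fH_append {ext : List Nd3} (hext : ext ≠ []) (v : List Nd3) : fH (ext ++ v) = fH ext := by
  obtain ⟨e, ext, rfl⟩ := List.exists_cons_of_ne_nil hext
  rfl

namespace VH

variable {C : Col} {d : ℕ}

lemma tail {a : Nd3} {w : List Nd3} (h : VH C d (a :: w)) : VH C d w := by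
  cases h <;> first | exact VH.nil | assumption

lemma even_length_of_fH_eq_G (hC : C ≠ Col.G) {x : List Nd3} (h : VH C d x)
    (hx : fH x = Col.G) : Even x.length := by
  cases h with
  | nil => simp
  | base => exact absurd hx hC
  | base' => exact absurd hx (Col.flip_ne_G hC)
  | odd _ _ _ _ _ _ hodd => simpa [parity_simps] using hodd
  | evenSame _ _ _ _ _ _ hc => exact absurd hx hc
  | evenFlip _ _ _ _ _ _ hc => exact absurd hx (Col.flip_ne_G hc)

/-- A child is determined by its first number and its colour; this pins down the
`Exists.choose` in `pH`. -/
lemma snd_unique (hC : C ≠ Col.G) {c₁ x y : ℕ} {c : Col} {w : List Nd3}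
    (hx : VH C d ((c₁, x, c) :: w)) (hy : VH C d ((c₁, y, c) :: w)) : x = y := by
  generalize ha : (c₁, x, c) = a at hx
  generalize hb : (c₁, y, c) = b at hy
  cases hx <;> cases hy <;> simp only [Prod.mk.injEq] at ha hb
  all_goals
    obtain ⟨rfl, rfl, rfl⟩ := ha
    obtain ⟨h1, rfl, h3⟩ := hb
  all_goals first
    | omega
    | exact absurd rfl ‹Col.G ≠ Col.G›
    | exact absurd h3 (Col.flip_ne_self ‹_›)
    | exact absurd h3.symm (Col.flip_ne_self ‹_›)
    | rw [nthAvoid_injective (by assumption) (by assumption) h1]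

/-- The label `(b₂, fH rest)` of the port from `(b₁, b₂, c) :: rest` to its parent is not
also the label of a port to a child. -/
lemma not_cons_parent_label {b₁ b₂ k : ℕ} {c : Col} {rest : List Nd3} :
    ¬ VH C d ((b₂, k, fH rest) :: (b₁, b₂, c) :: rest) := by
  intro h
  generalize hx : (b₂, k, fH rest) :: (b₁, b₂, c) :: rest = x at h
  cases h
  case nil | base | base' => simp at hx
  all_goals
    simp only [List.cons.injEq, Prod.mk.injEq] at hx
    obtain ⟨⟨h₁, -, h₃⟩, ⟨rfl, rfl, -⟩, rfl⟩ := hx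
  · exact nthAvoid_bplus_ne ‹_› h₁.symm
  · exact nthAvoid_ne ‹_› h₁.symm
  · exact Col.flip_ne_self ‹_› h₃.symm

lemma cons_append_of_cons_append {a : Nd3} {ext v u : List Nd3} (hext : ext ≠ [])
    (hv : Even v.length) (hu : Even u.length)
    (hVu : VH C d (ext ++ u)) (hlen : (ext ++ u).length < 2 * d)
    (h : VH C d (a :: (ext ++ v))) : VH C d (a :: (ext ++ u)) := by
  obtain ⟨e, ext, rfl⟩ := List.exists_cons_of_ne_nil hext
  generalize hx : (e :: ext) ++ v = x at h
  cases h with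
  | base | base' => simp at hx
  | odd b₁ b₂ c rest hc _ hodd _ j hj₁ hj₂ =>
    simp only [List.cons_append, List.cons.injEq] at hx
    obtain ⟨rfl, rfl⟩ := hx
    refine VH.odd b₁ b₂ c _ hc hVu ?_ hlen j hj₁ hj₂
    simp_all [parity_simps]
  | evenSame b₁ b₂ d₁ d₂ c rest hc _ heven _ j hj₁ hj₂ =>
    cases ext with
    | nil => simp_all [parity_simps]
    | cons e₂ ext =>
      simp only [List.cons_append, List.cons.injEq] at hx
      obtain ⟨rfl, rfl, rfl⟩ := hx
      exact VH.evenSame b₁ b₂ d₁ d₂ c _ hc hVu (by simp_all [parity_simps]) hlen j hj₁ hj₂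
  | evenFlip b₁ b₂ d₁ d₂ c rest hc _ heven _ j hj₁ hj₂ =>
    cases ext with
    | nil => simp_all [parity_simps]
    | cons e₂ ext =>
      simp only [List.cons_append, List.cons.injEq] at hx
      obtain ⟨rfl, rfl, rfl⟩ := hx
      exact VH.evenFlip b₁ b₂ d₁ d₂ c _ hc hVu (by simp_all [parity_simps]) hlen j hj₁ hj₂

end VH

abbrev HBisim (C : Col) (d : ℕ) : ℕ → List Nd3 → List Nd3 → Prop :=
  SVBisim (HGraph C d) (HGraph C d) fH fH (pH C d) (pH C d)

section HGraph

variable {C : Col} {d : ℕ}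

lemma pH_cons {b₁ b₂ : ℕ} {c : Col} {w : List Nd3} (h : VH C d ((b₁, b₂, c) :: w)) :
    pH C d ((b₁, b₂, c) :: w) (b₂, fH w) = some (w, (b₁, c)) := by
  rw [pH, dif_neg (fun ⟨_, h'⟩ => VH.not_cons_parent_label h')]
  simp [h]

lemma pH_of_cons (hC : C ≠ Col.G) {c₁ c₂ : ℕ} {c : Col} {w : List Nd3}
    (h : VH C d ((c₁, c₂, c) :: w)) :
    pH C d w (c₁, c) = some ((c₁, c₂, c) :: w, (c₂, fH w)) := by
  have hex : ∃ k, VH C d ((c₁, k, c) :: w) := ⟨c₂, h⟩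
  rw [pH, dif_pos hex, VH.snd_unique hC hex.choose_spec h]

lemma length_le_succ_of_adj {x y : List Nd3} (h : (HGraph C d).Adj x y) :
    y.length ≤ x.length + 1 := by
  obtain ⟨-, -, a, rfl | rfl⟩ := h <;> simp only [List.length_cons] <;> omega

lemma length_le_length_add_walk_length {x y : List Nd3} (p : (HGraph C d).Walk x y) :
    x.length ≤ y.length + p.length := by
  induction p with
  | nil => simp
  | cons h _ ih =>
    have := length_le_succ_of_adj h.symm
    simp only [SimpleGraph.Walk.length_cons]
    omega

lemma reachable_nil {x : List Nd3} (h : VH C d x) : (HGraph C d).Reachable x [] := by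
  induction x with
  | nil => rfl
  | cons a x ih =>
    have hadj : (HGraph C d).Adj (a :: x) x := ⟨h, h.tail, a, Or.inr rfl⟩
    exact hadj.reachable.trans (ih h.tail)

lemma length_le_dist_nil {x : List Nd3} (h : VH C d x) : x.length ≤ (HGraph C d).dist x [] := by
  obtain ⟨p, hp⟩ := (reachable_nil h).exists_walk_length_eq_dist
  simpa [hp] using length_le_length_add_walk_length p

variable {ext e v u : List Nd3}

lemma exists_append_eq_of_adj (hext : ext ≠ []) {y : List Nd3}
    (h : (HGraph C d).Adj (ext ++ v) y) : ∃ e, y = e ++ v := by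
  obtain ⟨-, -, a, rfl | h⟩ := h
  · exact ⟨a :: ext, rfl⟩
  · obtain ⟨b, ext, rfl⟩ := List.exists_cons_of_ne_nil hext
    exact ⟨ext, (List.cons.inj h).2.symm⟩

lemma adj_append_of_adj_append (hext : ext ≠ []) (hv : Even v.length) (hu : Even u.length)
    (hVu : VH C d (ext ++ u)) (hlen : (ext ++ u).length < 2 * d)
    (h : (HGraph C d).Adj (ext ++ v) (e ++ v)) : (HGraph C d).Adj (ext ++ u) (e ++ u) := by
  obtain ⟨-, hVe, a, h | h⟩ := h
  · obtain rfl : e = a :: ext := List.append_cancel_right h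
    exact ⟨hVu, VH.cons_append_of_cons_append hext hv hu hVu hlen hVe, a, Or.inl rfl⟩
  · obtain rfl : ext = a :: e := List.append_cancel_right h
    exact ⟨hVu, hVu.tail, a, Or.inr rfl⟩

lemma deg_append (hext : ext ≠ []) :
    deg (HGraph C d) (ext ++ v) = {e | (HGraph C d).Adj (ext ++ v) (e ++ v)}.ncard := by
  have : {y | (HGraph C d).Adj (ext ++ v) y} =
      (· ++ v) '' {e | (HGraph C d).Adj (ext ++ v) (e ++ v)} := by
    ext y
    constructor
    · intro hy
      obtain ⟨e, rfl⟩ := exists_append_eq_of_adj hext hy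
      exact ⟨e, hy, rfl⟩
    · rintro ⟨e, he, rfl⟩
      exact he
  rw [deg, this, Set.ncard_image_of_injective _ (List.append_left_injective v)]

lemma deg_append_eq (hext : ext ≠ []) (hv : Even v.length) (hu : Even u.length)
    (hVv : VH C d (ext ++ v)) (hVu : VH C d (ext ++ u))
    (hlv : (ext ++ v).length < 2 * d) (hlu : (ext ++ u).length < 2 * d) :
    deg (HGraph C d) (ext ++ v) = deg (HGraph C d) (ext ++ u) := by
  rw [deg_append hext, deg_append hext]
  congr 1
  ext e
  exact ⟨adj_append_of_adj_append hext hv hu hVu hlu,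
    adj_append_of_adj_append hext hu hv hVv hlv⟩

lemma exists_pH_append (hC : C ≠ Col.G) (hext : ext ≠ [])
    (h : (HGraph C d).Adj (ext ++ v) (e ++ v)) (h' : (HGraph C d).Adj (ext ++ u) (e ++ u)) :
    ∃ a b c, pH C d (e ++ v) a = some (ext ++ v, b) ∧ pH C d (e ++ u) a = some (ext ++ u, c) := by
  obtain ⟨hVv, hVe, ⟨a₁, a₂, a₃⟩, h | h⟩ := h
  · obtain rfl : e = (a₁, a₂, a₃) :: ext := List.append_cancel_right h
    refine ⟨(a₂, fH (ext ++ v)), (a₁, a₃), (a₁, a₃), pH_cons hVe, ?_⟩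
    rw [fH_append hext, ← fH_append hext u]
    exact pH_cons h'.2.1
  · obtain rfl : ext = (a₁, a₂, a₃) :: e := List.append_cancel_right h
    exact ⟨_, _, _, pH_of_cons hC hVv, pH_of_cons hC h'.1⟩

lemma hBisim_zero_append (hext : ext ≠ []) (hv : Even v.length) (hu : Even u.length)
    (hVv : VH C d (ext ++ v)) (hVu : VH C d (ext ++ u))
    (hlv : (ext ++ v).length < 2 * d) (hlu : (ext ++ u).length < 2 * d) :
    HBisim C d 0 (ext ++ v) (ext ++ u) :=
  ⟨deg_append_eq hext hv hu hVv hVu hlv hlu, by rw [fH_append hext, fH_append hext]⟩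

end HGraph


theorem hBisim_append {C : Col} {d : ℕ} {v u : List Nd3} (hC : C ≠ Col.G)
    (hv : Even v.length) (hu : Even u.length) {t : ℕ} (hb : HBisim C d t v u)
    (ext : List Nd3) (hVv : VH C d (ext ++ v)) (hVu : VH C d (ext ++ u))
    (hlv : (ext ++ v).length < 2 * d - t) (hlu : (ext ++ u).length < 2 * d - t) :
    HBisim C d t (ext ++ v) (ext ++ u) := by
  induction t generalizing ext with
  | zero =>
    rcases eq_or_ne ext [] with rfl | hext
    · exact hb
    exact hBisim_zero_append hext hv hu hVv hVu (by omega) (by omega)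
  | succ t ih =>
    rcases eq_or_ne ext [] with rfl | hext
    · exact hb
    have hnext : ∀ e, (HGraph C d).Adj (ext ++ v) (e ++ v) →
        (HGraph C d).Adj (ext ++ u) (e ++ u) ∧
        HBisim C d t (e ++ v) (e ++ u) ∧
        ∃ a b c, pH C d (e ++ v) a = some (ext ++ v, b) ∧
          pH C d (e ++ u) a = some (ext ++ u, c) := by
      intro e he
      have he' := adj_append_of_adj_append hext hv hu hVu (by omega) he
      refine ⟨he', ?_, exists_pH_append hC hext he he'⟩
      have := length_le_succ_of_adj he
      have := length_le_succ_of_adj he'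
      exact ih hb.of_succ e he.2.1 he'.2.1 (by omega) (by omega)
    refine ⟨hBisim_zero_append hext hv hu hVv hVu (by omega) (by omega),
      fun w hw => ?_, fun w' hw' => ?_⟩
    · obtain ⟨e, rfl⟩ := exists_append_eq_of_adj hext hw
      exact ⟨e ++ u, hnext e hw⟩
    · obtain ⟨e, rfl⟩ := exists_append_eq_of_adj hext hw'
      have hadj := adj_append_of_adj_append hext hu hv hVv (by omega) hw'
      exact ⟨e ++ v, hadj, (hnext e hadj).2⟩

theorem bisim_subtrees_general (C : Col) (hC : C ≠ Col.G) (d : ℕ)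
    (t : ℕ) (v u : List Nd3)
    (hv : VH C d v) (hu : VH C d u)
    (hvg : fH v = Col.G) (hug : fH u = Col.G)
    (hbisim : SVBisim (HGraph C d) (HGraph C d) fH fH
      (pH C d) (pH C d) t v u)
    (ext : List Nd3)
    (hw : VH C d (ext ++ v)) (hw' : VH C d (ext ++ u))
    (hdist : (HGraph C d).dist (ext ++ v) [] < 2 * d - t)
    (hdist' : (HGraph C d).dist (ext ++ u) [] < 2 * d - t) :
    SVBisim (HGraph C d) (HGraph C d) fH fH
      (pH C d) (pH C d) t (ext ++ v) (ext ++ u) :=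
  hBisim_append hC (hv.even_length_of_fH_eq_G hC hvg) (hu.even_length_of_fH_eq_G hC hug)
    hbisim ext hw hw' ((length_le_dist_nil hw).trans_lt hdist)
    ((length_le_dist_nil hw').trans_lt hdist')

/-- Let `v̂, û` be grey nodes of `Ĥ_{C,d}` whose underlying nodes `v, u` of
`H_{C,d}` are `t`-SV-bisimilar. If `w = ext ++ v` is in the domain of the
partial isomorphism `f_{v,u}` (the first appended triple `c₁`, the last
element of the reversed list `ext`, has colour `C̄`, and both `ext ++ v` and
`f_{v,u}(w) = ext ++ u` are nodes of `H_{C,d}`), and both `w` and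
`f_{v,u}(w)` are at distance `< 2d − t` from the root, then `w` and
`f_{v,u}(w)` are `t`-SV-bisimilar in `(H_{C,d}, f_C, p_C)`. -/
theorem bisim_subtrees (C : Col) (hC : C ≠ Col.G) (d : ℕ) (hd : 2 ≤ d)
    (t : ℕ) (v u : List Nd3)
    (hv : VH C d v) (hu : VH C d u)
    (hvhat : inHat C v) (huhat : inHat C u)
    (hvg : fH v = Col.G) (hug : fH u = Col.G)
    (hbisim : SVBisim (HGraph C d) (HGraph C d) fH fH
      (pH C d) (pH C d) t v u)
    (ext : List Nd3)
    (hext : ext = [] ∨ ∃ c : Nd3, ext.getLast? = some c ∧ c.2.2 = Col.flip C)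
    (hw : VH C d (ext ++ v)) (hw' : VH C d (ext ++ u))
    (hdist : (HGraph C d).dist (ext ++ v) [] < 2 * d - t)
    (hdist' : (HGraph C d).dist (ext ++ u) [] < 2 * d - t) :
    SVBisim (HGraph C d) (HGraph C d) fH fH
      (pH C d) (pH C d) t (ext ++ v) (ext ++ u) :=
  bisim_subtrees_general C hC d t v u hv hu hvg hug hbisim ext hw hw' hdist hdist'

end Paper
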